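/- Let σ be a permutation of {1,…,d}, let a, a' ∈ ℝ_+^d, and let T = T_σ(a), S = T_σ(a'). Fix i ∈ {1,…,d−1} and r ≥ 0, and suppose that x_i(a) and x_i(a') have the same itinerary up to the r-th iteration, i.e., for every 0 ≤ k < r and every ℓ ∈ {1,…,d}, T^k(x_i(a)) ∈ I_ℓ(a) if and only if S^k(x_i(a')) ∈ I_ℓ(a'). Then |T^r(x_i(a)) − S^r(x_i(a'))| ≤ (r+1)·d²·‖a − a'‖_∞. -/

import Mathlib

open MeasureTheory Filter Set

/-- `partialSum d a i` is the point `x_i(a) = Σ_{j < i} a_j` (with `Fin d` zero-indexed, so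
`i : ℕ` ranges over `0, …, d`). -/
noncomputable def partialSum (d : ℕ) (a : Fin d → ℝ) (i : ℕ) : ℝ :=
  ∑ j ∈ Finset.univ.filter (fun j : Fin d => (j : ℕ) < i), a j

/-- `partialSumPerm d σ a i` is the point `x'_i(a) = Σ_{j=1}^i a_{σ⁻¹(j)} = Σ_{j : σ j < i} a_j`. -/
noncomputable def partialSumPerm (d : ℕ) (σ : Equiv.Perm (Fin d)) (a : Fin d → ℝ) (i : ℕ) : ℝ :=
  ∑ j ∈ Finset.univ.filter (fun j : Fin d => ((σ j : ℕ)) < i), a j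

/-- The interval `I_a = [0, Σ_i a_i)`. -/
noncomputable def ietInterval (d : ℕ) (a : Fin d → ℝ) : Set ℝ :=
  Set.Ico 0 (partialSum d a d)

/-- The interval exchange transformation `T_σ(a)`: on the interval
`I_i = [x_{i-1}(a), x_i(a))` (zero-indexed: `[x_i, x_{i+1})` for `i : Fin d`) it translates by
`x'_{σ(i)-1}(a) - x_{i-1}(a)`.  Outside `I_a` it is (arbitrarily) the identity. -/
noncomputable def iet (d : ℕ) (σ : Equiv.Perm (Fin d)) (a : Fin d → ℝ) (x : ℝ) : ℝ :=
  if h : ∃ i : Fin d, partialSum d a (i : ℕ) ≤ x ∧ x < partialSum d a ((i : ℕ) + 1) then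
    x - partialSum d a ((h.choose : Fin d) : ℕ) + partialSumPerm d σ a ((σ h.choose : Fin d) : ℕ)
  else x

/-- `σ` is irreducible: no `k` with `1 ≤ k < d` such that `σ({1,…,k}) = {1,…,k}`. -/
def IETIrreducible (d : ℕ) (σ : Equiv.Perm (Fin d)) : Prop :=
  ∀ k : ℕ, 0 < k → k < d → ¬ (∀ i : Fin d, (i : ℕ) < k → (σ i : ℕ) < k)

/-- The function `L_{a,b} : I_a → ℝ`, equal to `y_i(b) - y'_{σ(i)}(b)` on `I_i(a)`
(extended by `0` off `I_a`). -/
noncomputable def ietL (d : ℕ) (σ : Equiv.Perm (Fin d)) (a b : Fin d → ℝ) (x : ℝ) : ℝ :=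
  if h : ∃ i : Fin d, partialSum d a (i : ℕ) ≤ x ∧ x < partialSum d a ((i : ℕ) + 1) then
    partialSum d b ((h.choose : ℕ) + 1) - partialSumPerm d σ b ((σ h.choose : ℕ) + 1)
  else 0

/-- A connection `(i,j,m)` of `T = T_σ(a)`: `i, j ∈ {0,…,d-1}`, `m > 0`, `T^m(x_i) = x_j`. -/
def IsConnection (d : ℕ) (σ : Equiv.Perm (Fin d)) (a : Fin d → ℝ) (i j m : ℕ) : Prop :=
  i < d ∧ j < d ∧ 0 < m ∧ (iet d σ a)^[m] (partialSum d a i) = partialSum d a j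

/-- `μ ∈ ℳ_a`: a non-atomic `T_σ(a)`-invariant Borel probability measure on `I_a`. -/
def IsIETInvariantMeasure (d : ℕ) (σ : Equiv.Perm (Fin d)) (a : Fin d → ℝ)
    (μ : Measure ℝ) : Prop :=
  IsProbabilityMeasure μ ∧ NoAtoms μ ∧ μ (ietInterval d a)ᶜ = 0 ∧
    Measure.map (iet d σ a) μ = μ

/-- `(a,b)` is a positive pair. -/
def IsPositivePair (d : ℕ) (σ : Equiv.Perm (Fin d)) (a b : Fin d → ℝ) : Prop :=
  (∀ μ : Measure ℝ, IsIETInvariantMeasure d σ a μ → 0 < ∫ x, ietL d σ a b x ∂μ) ∧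
  (∀ i j m : ℕ, IsConnection d σ a i j m →
    partialSum d b i - partialSum d b j <
      ∑ n ∈ Finset.range m, ietL d σ a b ((iet d σ a)^[n] (partialSum d a i)))

/-- `ε_n(a)`. -/
noncomputable def ietEps (d : ℕ) (σ : Equiv.Perm (Fin d)) (a : Fin d → ℝ) (n : ℕ) : ℝ :=
  sInf { v : ℝ | ∃ i j k l : ℕ, 1 ≤ i ∧ i ≤ d - 1 ∧ 1 ≤ j ∧ j ≤ d - 1 ∧
    k ≤ n ∧ l ≤ n ∧ (i, k) ≠ (j, l) ∧
    v = |(iet d σ a)^[k] (partialSum d a i) - (iet d σ a)^[l] (partialSum d a j)| }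

/-- `a` is of recurrence type: `limsup n ε_n(a) > 0`. -/
def OfRecurrenceType (d : ℕ) (σ : Equiv.Perm (Fin d)) (a : Fin d → ℝ) : Prop :=
  0 < Filter.limsup (fun n : ℕ => (n : ℝ) * ietEps d σ a n) Filter.atTop

/-- `a` is of bounded type: `liminf n ε_n(a) > 0`. -/
def OfBoundedType (d : ℕ) (σ : Equiv.Perm (Fin d)) (a : Fin d → ℝ) : Prop :=
  0 < Filter.liminf (fun n : ℕ => (n : ℝ) * ietEps d σ a n) Filter.atTop

/-- The (topological) support of a measure on `ℝ`. -/
def measSupport (μ : Measure ℝ) : Set ℝ :=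
  {x : ℝ | ∀ r : ℝ, 0 < r → 0 < μ (Set.Ioo (x - r) (x + r))}

/-- `μ` is a finite regular Borel measure on `ℝ` which is `(C,α)`-decaying and `D`-Federer. -/
def IsDecayingFederer (μ : Measure ℝ) (C α D : ℝ) : Prop :=
  IsFiniteMeasure μ ∧ μ.Regular ∧
  ∀ x ∈ measSupport μ, ∀ ε r : ℝ, 0 < ε → ε < 1 → 0 < r → r < 1 →
    μ (Set.Ioo (x - ε * r) (x + ε * r)) ≤
      ENNReal.ofReal (C * ε ^ α) * μ (Set.Ioo (x - r) (x + r)) ∧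
    μ (Set.Ioo (x - 3 * r) (x + 3 * r)) ≤
      ENNReal.ofReal D * μ (Set.Ioo (x - r) (x + r))

/-- `μ` is decaying and Federer: `(C,α)`-decaying and `D`-Federer for some `C, α, D > 0`. -/
def DecayingFederer (μ : Measure ℝ) : Prop :=
  ∃ C α D : ℝ, 0 < C ∧ 0 < α ∧ 0 < D ∧ IsDecayingFederer μ C α D

/-!
Inside the piece `I_ℓ`, `T_σ(a)` is the translation by `x'_{σ(ℓ)}(a) - x_ℓ(a)`, and both partial sums
move by at most `d ‖a - a'‖` when `a` is replaced by `a'`. If `T^k(x_i(a))` and `S^k(x_i(a'))` lie in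
pieces with the same label, one more step therefore increases their distance by at most
`2 d ‖a - a'‖ ≤ d² ‖a - a'‖`; if they lie in no piece, both maps fix them. Starting from
`|x_i(a) - x_i(a')| ≤ d ‖a - a'‖`, induction on `r` gives the bound.
-/

lemma abs_sum_sub_sum_le_card_mul_norm {ι : Type*} [Fintype ι] (s : Finset ι) (f g : ι → ℝ) :
    |∑ j ∈ s, f j - ∑ j ∈ s, g j| ≤ Fintype.card ι * ‖f - g‖ :=
  calc |∑ j ∈ s, f j - ∑ j ∈ s, g j| = ‖∑ j ∈ s, (f - g) j‖ := by
        rw [Real.norm_eq_abs, ← Finset.sum_sub_distrib]; rfl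
    _ ≤ ∑ _j ∈ s, ‖f - g‖ := norm_sum_le_of_le s fun j _ => norm_le_pi_norm (f - g) j
    _ = s.card • ‖f - g‖ := Finset.sum_const _
    _ ≤ Fintype.card ι * ‖f - g‖ := by
        rw [nsmul_eq_mul]
        gcongr
        exact_mod_cast s.card_le_univ

section PartialSum

variable {d : ℕ} {a : Fin d → ℝ}

lemma abs_partialSum_sub_le (a a' : Fin d → ℝ) (n : ℕ) :
    |partialSum d a n - partialSum d a' n| ≤ d * ‖a - a'‖ := by
  simpa [partialSum] using abs_sum_sub_sum_le_card_mul_norm _ a a'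

lemma abs_partialSumPerm_sub_le (σ : Equiv.Perm (Fin d)) (a a' : Fin d → ℝ) (n : ℕ) :
    |partialSumPerm d σ a n - partialSumPerm d σ a' n| ≤ d * ‖a - a'‖ := by
  simpa [partialSumPerm] using abs_sum_sub_sum_le_card_mul_norm _ a a'

lemma partialSum_mono (ha : 0 ≤ a) : Monotone (partialSum d a) := fun _ _ hmn =>
  Finset.sum_le_sum_of_subset_of_nonneg
    (Finset.monotone_filter_right _ fun _ _ hj => lt_of_lt_of_le hj hmn) fun j _ _ => ha j

lemma eq_of_mem_Ico_partialSum (ha : 0 ≤ a) {x : ℝ} {j ℓ : Fin d}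
    (hj : x ∈ Ico (partialSum d a j) (partialSum d a (j + 1)))
    (hℓ : x ∈ Ico (partialSum d a ℓ) (partialSum d a (ℓ + 1))) : j = ℓ := by
  have not_both {m n : Fin d} (hmn : m < n)
      (hm : x ∈ Ico (partialSum d a m) (partialSum d a (m + 1)))
      (hn : x ∈ Ico (partialSum d a n) (partialSum d a (n + 1))) : False :=
    (hm.2.trans_le (partialSum_mono ha (Nat.succ_le_of_lt hmn))).not_ge hn.1
  rcases lt_trichotomy j ℓ with h | h | h
  · exact (not_both h hj hℓ).elim
  · exact h
  · exact (not_both h hℓ hj).elim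

end PartialSum

section Iet

variable {d : ℕ} {σ : Equiv.Perm (Fin d)} {a a' : Fin d → ℝ}

lemma iet_of_mem_Ico (ha : 0 ≤ a) {x : ℝ} {ℓ : Fin d}
    (hx : x ∈ Ico (partialSum d a ℓ) (partialSum d a (ℓ + 1))) :
    iet d σ a x = x - partialSum d a ℓ + partialSumPerm d σ a (σ ℓ) := by
  have hex : ∃ j : Fin d, partialSum d a j ≤ x ∧ x < partialSum d a (j + 1) := ⟨ℓ, hx⟩
  rw [iet, dif_pos hex, eq_of_mem_Ico_partialSum ha hex.choose_spec hx]

lemma iet_of_forall_notMem_Ico {x : ℝ}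
    (hx : ∀ ℓ : Fin d, x ∉ Ico (partialSum d a ℓ) (partialSum d a (ℓ + 1))) :
    iet d σ a x = x :=
  dif_neg fun ⟨ℓ, hℓ⟩ => hx ℓ hℓ

lemma abs_iet_sub_iet_le (ha : 0 ≤ a) (ha' : 0 ≤ a') {x x' : ℝ}
    (hsame : ∀ ℓ : Fin d, x ∈ Ico (partialSum d a ℓ) (partialSum d a (ℓ + 1)) ↔
      x' ∈ Ico (partialSum d a' ℓ) (partialSum d a' (ℓ + 1))) :
    |iet d σ a x - iet d σ a' x'| ≤ |x - x'| + 2 * d * ‖a - a'‖ := by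
  by_cases hx : ∃ ℓ : Fin d, x ∈ Ico (partialSum d a ℓ) (partialSum d a (ℓ + 1))
  · obtain ⟨ℓ, hℓ⟩ := hx
    rw [iet_of_mem_Ico ha hℓ, iet_of_mem_Ico ha' ((hsame ℓ).1 hℓ)]
    have hsum := abs_partialSum_sub_le a a' ℓ
    have hperm := abs_partialSumPerm_sub_le σ a a' (σ ℓ)
    have := le_abs_self (x - x')
    have := neg_abs_le (x - x')
    rw [abs_le] at hsum hperm ⊢
    constructor <;> linarith
  · simp only [not_exists] at hx
    rw [iet_of_forall_notMem_Ico hx,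
      iet_of_forall_notMem_Ico fun ℓ hℓ => hx ℓ ((hsame ℓ).2 hℓ)]
    exact le_add_of_nonneg_right (by positivity)

lemma abs_iet_iterate_sub_iet_iterate_le (ha : 0 ≤ a) (ha' : 0 ≤ a') {x x' : ℝ} {r : ℕ}
    (hitin : ∀ k < r, ∀ ℓ : Fin d,
      (iet d σ a)^[k] x ∈ Ico (partialSum d a ℓ) (partialSum d a (ℓ + 1)) ↔
      (iet d σ a')^[k] x' ∈ Ico (partialSum d a' ℓ) (partialSum d a' (ℓ + 1))) :
    |(iet d σ a)^[r] x - (iet d σ a')^[r] x'| ≤ |x - x'| + r * (2 * d * ‖a - a'‖) := by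
  induction r with
  | zero => simp
  | succ r ih =>
    rw [Function.iterate_succ_apply', Function.iterate_succ_apply']
    have hstep := abs_iet_sub_iet_le (σ := σ) ha ha' (hitin r r.lt_succ_self)
    have hprev := ih fun k hk => hitin k (hk.trans r.lt_succ_self)
    push_cast
    linarith

end Iet

theorem itinerary_estimate_general (d : ℕ) (hd : 2 ≤ d) (σ : Equiv.Perm (Fin d))
    (a a' : Fin d → ℝ) (ha : ∀ i, 0 < a i) (ha' : ∀ i, 0 < a' i)
    (i : ℕ) (r : ℕ)
    (hitin : ∀ k : ℕ, k < r → ∀ ℓ : Fin d,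
      ((iet d σ a)^[k] (partialSum d a i) ∈
        Set.Ico (partialSum d a (ℓ : ℕ)) (partialSum d a ((ℓ : ℕ) + 1))) ↔
      ((iet d σ a')^[k] (partialSum d a' i) ∈
        Set.Ico (partialSum d a' (ℓ : ℕ)) (partialSum d a' ((ℓ : ℕ) + 1)))) :
    |(iet d σ a)^[r] (partialSum d a i) - (iet d σ a')^[r] (partialSum d a' i)| ≤
      ((r : ℝ) + 1) * (d : ℝ) ^ 2 * ‖a - a'‖ := by
  have hd' : (2 : ℝ) ≤ d := by exact_mod_cast hd
  have hcoef : (d : ℝ) + r * (2 * d) ≤ (r + 1) * d ^ 2 := by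
    nlinarith [mul_nonneg r.cast_nonneg (mul_nonneg (by linarith : (0 : ℝ) ≤ d)
      (by linarith : (0 : ℝ) ≤ d - 2))]
  calc |(iet d σ a)^[r] (partialSum d a i) - (iet d σ a')^[r] (partialSum d a' i)|
      ≤ |partialSum d a i - partialSum d a' i| + r * (2 * d * ‖a - a'‖) :=
        abs_iet_iterate_sub_iet_iterate_le (fun j => (ha j).le) (fun j => (ha' j).le) hitin
    _ ≤ d * ‖a - a'‖ + r * (2 * d * ‖a - a'‖) := by
        gcongr
        exact abs_partialSum_sub_le a a' i
    _ = (d + r * (2 * d)) * ‖a - a'‖ := by ring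
    _ ≤ (r + 1) * d ^ 2 * ‖a - a'‖ := by gcongr

/-- itinerary estimate. Let `T = T_σ(a)` and `S = T_σ(a')`, and suppose the
discontinuity point `x_i(a)` (for `1 ≤ i ≤ d-1`) has the same itinerary under `T` as `x_i(a')`
has under `S` up to the `r`-th iterate. Then
`|T^r(x_i(a)) - S^r(x_i(a'))| ≤ (r+1) d² ‖a - a'‖_∞`
(here the norm on `Fin d → ℝ` is the sup norm). -/
theorem itinerary_estimate (d : ℕ) (hd : 2 ≤ d) (σ : Equiv.Perm (Fin d))
    (a a' : Fin d → ℝ) (ha : ∀ i, 0 < a i) (ha' : ∀ i, 0 < a' i)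
    (i : ℕ) (hi1 : 1 ≤ i) (hi2 : i ≤ d - 1) (r : ℕ)
    (hitin : ∀ k : ℕ, k < r → ∀ ℓ : Fin d,
      ((iet d σ a)^[k] (partialSum d a i) ∈
        Set.Ico (partialSum d a (ℓ : ℕ)) (partialSum d a ((ℓ : ℕ) + 1))) ↔
      ((iet d σ a')^[k] (partialSum d a' i) ∈
        Set.Ico (partialSum d a' (ℓ : ℕ)) (partialSum d a' ((ℓ : ℕ) + 1)))) :
    |(iet d σ a)^[r] (partialSum d a i) - (iet d σ a')^[r] (partialSum d a' i)| ≤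
      ((r : ℝ) + 1) * (d : ℝ) ^ 2 * ‖a - a'‖ :=
  itinerary_estimate_general d hd σ a a' ha ha' i r hitin
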